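/- For all k ≥ 0 and n ≥ 0, ad_V^n([y^k V, W]) = y^{k+n}·p^{(n+2)}(z)·H - (k+n)·y^{k-1+n}·p^{(n+1)}(z)·V. -/

import Mathlib

open Polynomial

set_option synthInstance.maxHeartbeats 1000000
set_option maxHeartbeats 1000000

noncomputable section

/-- Coordinate ring of the Danielewski surface `x y = p(z)`. -/
abbrev DS (p : Polynomial ℂ) : Type :=
  MvPolynomial (Fin 3) ℂ ⧸
    Ideal.span ({MvPolynomial.X 0 * MvPolynomial.X 1 -
      Polynomial.aeval (MvPolynomial.X 2) p} : Set (MvPolynomial (Fin 3) ℂ))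

def dsX (p : Polynomial ℂ) : DS p := Ideal.Quotient.mk _ (MvPolynomial.X 0)
def dsY (p : Polynomial ℂ) : DS p := Ideal.Quotient.mk _ (MvPolynomial.X 1)
def dsZ (p : Polynomial ℂ) : DS p := Ideal.Quotient.mk _ (MvPolynomial.X 2)

/-! Since `⁅V, H⁆ = -V`, the bracket with `V` maps `a • H - b • V` to `V a • H - (a + V b) • V`,
so all iterates stay in the span of `H` and `V`. On coefficients `y^m g(z)` the derivation `V`
acts as `y · d/dz`. Starting from `⁅y^k • V, W⁆ = y^k p''(z) • H - k y^(k-1) p'(z) • V`, each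
step therefore adds one `y` and one derivative to the coefficient of `H`, and raises the factor
`k + n` of the coefficient of `V` by one. -/

namespace Derivation

variable {R A : Type*} [CommRing R] [CommRing A] [Algebra R A]

theorem lie_smul_right (D E : Derivation R A A) (a : A) :
    ⁅D, a • E⁆ = a • ⁅D, E⁆ + D a • E := by
  ext b
  simp only [commutator_apply, add_apply, smul_apply, leibniz, smul_eq_mul]
  ring

theorem smul_lie (D E : Derivation R A A) (a : A) :
    ⁅a • D, E⁆ = a • ⁅D, E⁆ - E a • D := by
  ext b
  simp only [commutator_apply, sub_apply, smul_apply, leibniz, smul_eq_mul]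
  ring

theorem lie_smul_sub_smul_of_lie_eq_neg {V H : Derivation R A A} (hVH : ⁅V, H⁆ = -V)
    (a b : A) : ⁅V, a • H - b • V⁆ = V a • H - (a + V b) • V := by
  rw [lie_sub, lie_smul_right, lie_smul_right, hVH, lie_self]
  module

theorem iterate_lie_smul_sub_smul_of_lie_eq_neg {V H : Derivation R A A} (hVH : ⁅V, H⁆ = -V)
    {a b : ℕ → A} (ha : ∀ n, a (n + 1) = V (a n)) (hb : ∀ n, b (n + 1) = a n + V (b n))
    (n : ℕ) : (fun X => ⁅V, X⁆)^[n] (a 0 • H - b 0 • V) = a n • H - b n • V := by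
  induction n with
  | zero => rfl
  | succ n ih =>
    rw [Function.iterate_succ_apply', ih, lie_smul_sub_smul_of_lie_eq_neg hVH, ha, hb]

end Derivation

theorem ds_adjoin_eq_top (p : Polynomial ℂ) :
    Algebra.adjoin ℂ ({dsX p, dsY p, dsZ p} : Set (DS p)) = ⊤ := by
  have hrange :
      Set.range (Ideal.Quotient.mkₐ ℂ _ ∘ MvPolynomial.X) = {dsX p, dsY p, dsZ p} := by
    ext b
    simp [Fin.exists_fin_succ, dsX, dsY, dsZ, eq_comm]
  rw [← hrange, Set.range_comp, ← AlgHom.map_adjoin, MvPolynomial.adjoin_range_X,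
    Algebra.map_top, AlgHom.range_eq_top]
  exact Ideal.Quotient.mkₐ_surjective ℂ _

theorem ds_derivation_ext {p : Polynomial ℂ} {D₁ D₂ : Derivation ℂ (DS p) (DS p)}
    (hx : D₁ (dsX p) = D₂ (dsX p)) (hy : D₁ (dsY p) = D₂ (dsY p))
    (hz : D₁ (dsZ p) = D₂ (dsZ p)) : D₁ = D₂ :=
  Derivation.ext_of_adjoin_eq_top _ (ds_adjoin_eq_top p) <| by
    rintro b (rfl | rfl | rfl) <;> assumption

section

variable {p : Polynomial ℂ}

theorem ds_lie_eq_neg_of_apply {V H : Derivation ℂ (DS p) (DS p)}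
    (hVx : V (dsX p) = aeval (dsZ p) (derivative p)) (hVy : V (dsY p) = 0)
    (hVz : V (dsZ p) = dsY p)
    (hHx : H (dsX p) = -dsX p) (hHy : H (dsY p) = dsY p) (hHz : H (dsZ p) = 0) :
    ⁅V, H⁆ = -V := by
  refine ds_derivation_ext ?_ ?_ ?_ <;>
    simp [Derivation.commutator_apply, Derivation.map_aeval, hVx, hVy, hVz, hHx, hHy, hHz]

theorem ds_lie_eq_smul_of_apply {V W H : Derivation ℂ (DS p) (DS p)}
    (hVx : V (dsX p) = aeval (dsZ p) (derivative p)) (hVy : V (dsY p) = 0)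
    (hVz : V (dsZ p) = dsY p)
    (hWx : W (dsX p) = 0) (hWy : W (dsY p) = aeval (dsZ p) (derivative p))
    (hWz : W (dsZ p) = dsX p)
    (hHx : H (dsX p) = -dsX p) (hHy : H (dsY p) = dsY p) (hHz : H (dsZ p) = 0) :
    ⁅V, W⁆ = aeval (dsZ p) (derivative (derivative p)) • H := by
  refine ds_derivation_ext ?_ ?_ ?_ <;>
    simp [Derivation.commutator_apply, Derivation.map_aeval, hVx, hVy, hVz, hWx, hWy, hWz,
      hHx, hHy, hHz]
  ring

theorem ds_apply_pow_mul_aeval {V : Derivation ℂ (DS p) (DS p)} (hVy : V (dsY p) = 0)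
    (hVz : V (dsZ p) = dsY p) (m : ℕ) (q : Polynomial ℂ) :
    V (dsY p ^ m * aeval (dsZ p) q) = dsY p ^ (m + 1) * aeval (dsZ p) (derivative q) := by
  rw [Derivation.leibniz, Derivation.leibniz_pow, Derivation.map_aeval, hVy, hVz]
  simp only [smul_zero, smul_eq_mul, mul_zero, add_zero, pow_succ]
  ring

/-- For `m = 0` the truncated exponent `m - 1` is harmless: the factor `m` kills the term. -/
theorem ds_apply_natCast_smul_pow_pred_mul_aeval
    {V : Derivation ℂ (DS p) (DS p)} (hVy : V (dsY p) = 0) (hVz : V (dsZ p) = dsY p)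
    (m : ℕ) (q : Polynomial ℂ) :
    V ((m : ℂ) • (dsY p ^ (m - 1) * aeval (dsZ p) q)) =
      (m : ℂ) • (dsY p ^ m * aeval (dsZ p) (derivative q)) := by
  cases m with
  | zero => simp
  | succ m => rw [Derivation.map_smul, Nat.add_sub_cancel, ds_apply_pow_mul_aeval hVy hVz]

end

/-- for all `k, n ≥ 0`,
`ad_V^n([y^k V, W]) = y^(k+n)·p^(n+2)·H - (k+n)·y^(k+n-1)·p^(n+1)·V`. -/
theorem adV_iter_ykVW (p : Polynomial ℂ)
    (V W H : Derivation ℂ (DS p) (DS p))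
    (hVx : V (dsX p) = Polynomial.aeval (dsZ p) (derivative p))
    (hVy : V (dsY p) = 0) (hVz : V (dsZ p) = dsY p)
    (hWx : W (dsX p) = 0)
    (hWy : W (dsY p) = Polynomial.aeval (dsZ p) (derivative p))
    (hWz : W (dsZ p) = dsX p)
    (hHx : H (dsX p) = -dsX p) (hHy : H (dsY p) = dsY p)
    (hHz : H (dsZ p) = 0) :
    ∀ k n : ℕ,
      (fun X => ⁅V, X⁆)^[n] ⁅(dsY p ^ k) • V, W⁆ =
        (dsY p ^ (k + n) *
            Polynomial.aeval (dsZ p) ((fun q => derivative q)^[n+2] p)) • H -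
        ((((k : ℂ) + n)) • (dsY p ^ (k + n - 1) *
            Polynomial.aeval (dsZ p) ((fun q => derivative q)^[n+1] p))) • V := by
  intro k n
  have hbase : ⁅dsY p ^ k • V, W⁆ =
      (dsY p ^ k * aeval (dsZ p) (derivative (derivative p))) • H -
        ((k : ℂ) • (dsY p ^ (k - 1) * aeval (dsZ p) (derivative p))) • V := by
    rw [Derivation.smul_lie, ds_lie_eq_smul_of_apply hVx hVy hVz hWx hWy hWz hHx hHy hHz,
      Derivation.leibniz_pow, hWy, smul_eq_mul, Nat.cast_smul_eq_nsmul]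
    congr 1
    ext
    simp [mul_assoc]
  have hderiv (m : ℕ) (q : Polynomial ℂ) :
      derivative ((fun q => derivative q)^[m] q) = (fun q => derivative q)^[m + 1] q :=
    (Function.iterate_succ_apply' _ _ _).symm
  rw [hbase]
  refine Eq.trans ?_ (Derivation.iterate_lie_smul_sub_smul_of_lie_eq_neg
    (ds_lie_eq_neg_of_apply hVx hVy hVz hHx hHy hHz)
    (a := fun m => dsY p ^ (k + m) * aeval (dsZ p) ((fun q => derivative q)^[m + 2] p))
    (b := fun m => ((k : ℂ) + m) •
      (dsY p ^ (k + m - 1) * aeval (dsZ p) ((fun q => derivative q)^[m + 1] p))) ?_ ?_ n)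
  · simp
  · intro m
    rw [ds_apply_pow_mul_aeval hVy hVz, hderiv]
    rfl
  · intro m
    simp only [← Nat.cast_add]
    rw [ds_apply_natCast_smul_pow_pred_mul_aeval hVy hVz, hderiv,
      show k + (m + 1) - 1 = k + m by omega, ← add_assoc, Nat.cast_succ, add_smul, one_smul,
      add_comm]
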